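/- Variance of the first-order linearization of the logarithmic factorial effect estimator (Proposition 2, variance expression): suppose P_z > 0 for all z ∈ {0,1}^K, and for a nonempty subset ℓ ⊆ {1,…,K} define the linearized statistic η̃_ℓ = η_ℓ + 2^{−(K−1)} Σ_{z ∈ {0,1}^K} λ_{ℓ,z} (p_z − P_z)/P_z, where η_ℓ = 2^{−(K−1)} Σ_z λ_{ℓ,z} log P_z. Then under a completely randomized assignment, Var(η̃_ℓ) = 2^{−2(K−1)} ( Σ_{z} (N − N_z) S_z² / (N N_z P_z²) − (1/N) Σ_{z < z'} λ_{ℓ,z} λ_{ℓ,z'} (S_z² + S_{z'}² − S²_{z−z'})/(P_z P_{z'}) ), where the second sum is over unordered pairs of distinct treatments. -/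

import Mathlib

open Finset

/-- The finset of completely randomized assignments of `N` units to treatments in `J`
with group sizes `Nj`. -/
def assignments (N : ℕ) {J : Type*} [Fintype J] [DecidableEq J] (Nj : J → ℕ) :
    Finset (Fin N → J) :=
  Finset.univ.filter fun T => ∀ j, (Finset.univ.filter fun i => T i = j).card = Nj j

/-- Expectation with respect to the uniform distribution on completely randomized
assignments. -/
noncomputable def expect {N : ℕ} {J : Type*} [Fintype J] [DecidableEq J]
    (Nj : J → ℕ) (f : (Fin N → J) → ℝ) : ℝ :=
  (∑ T ∈ assignments N Nj, f T) / ((assignments N Nj).card : ℝ)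

/-- Variance with respect to the randomization distribution. -/
noncomputable def rvar {N : ℕ} {J : Type*} [Fintype J] [DecidableEq J]
    (Nj : J → ℕ) (f : (Fin N → J) → ℝ) : ℝ :=
  expect Nj fun T => (f T - expect Nj f) ^ 2

/-- Covariance with respect to the randomization distribution. -/
noncomputable def rcov {N : ℕ} {J : Type*} [Fintype J] [DecidableEq J]
    (Nj : J → ℕ) (f g : (Fin N → J) → ℝ) : ℝ :=
  expect Nj fun T => (f T - expect Nj f) * (g T - expect Nj g)

/-- Observed group mean `p_j` of treatment `j` under assignment `T`. -/
noncomputable def pObs {N : ℕ} {J : Type*} [DecidableEq J]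
    (Y : Fin N → J → ℝ) (Nj : J → ℕ) (j : J) (T : Fin N → J) : ℝ :=
  (∑ i ∈ Finset.univ.filter fun i => T i = j, Y i j) / (Nj j : ℝ)

/-- Population mean `P_j`. -/
noncomputable def Pmean {N : ℕ} {J : Type*} (Y : Fin N → J → ℝ) (j : J) : ℝ :=
  (∑ i, Y i j) / (N : ℝ)

/-- Population variance `S_j²`. -/
noncomputable def S2 {N : ℕ} {J : Type*} (Y : Fin N → J → ℝ) (j : J) : ℝ :=
  (∑ i, (Y i j - Pmean Y j) ^ 2) / ((N : ℝ) - 1)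

/-- Variance of unit-level differences `S²_{j-j'}`. -/
noncomputable def S2diff {N : ℕ} {J : Type*} (Y : Fin N → J → ℝ) (j j' : J) : ℝ :=
  (∑ i, (Y i j - Y i j' - (Pmean Y j - Pmean Y j')) ^ 2) / ((N : ℝ) - 1)

/-- Treatments in a `2^K` factorial experiment, indexed by `Fin (2^K)`: treatment `z`
corresponds to the element of `{0,1}^K` whose `k`-th coordinate is the `k`-th binary digit
of `z`. The contrast coefficient is `λ_{ℓ,z} = Π_{k∈ℓ} (2 z_k - 1)`. -/
def lam {K : ℕ} (ℓ : Finset (Fin K)) (z : Fin (2 ^ K)) : ℝ :=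
  ∏ k ∈ ℓ, (if Nat.testBit z.val k.val then 1 else -1)

/-!
Writing `p_z - P_z = N_z⁻¹ ∑ᵢ 1[T i = z] (Y_i(z) - P_z)` reduces everything to the first two
moments of the assignment indicators. Relabelling the units preserves the uniform distribution on
assignments, so `P(T i = z) = N_z / N`, and for `i ≠ i'` the probability of `T i = z, T i' = z'`
does not depend on `i'`; summing over `i'` identifies it as
`N_z (N_{z'} - δ_{z z'}) / (N (N - 1))`. As centred outcomes sum to zero, this gives
`Cov(p_z, p_z) = (N - N_z) S_z² / (N N_z)` and `Cov(p_z, p_{z'}) = -S_{z z'} / N` for `z ≠ z'`,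
where `2 S_{z z'} = S_z² + S_{z'}² - S²_{z-z'}`. The linearized estimator is affine in the `p_z`,
so its variance is the quadratic form of these covariances, whose diagonal collapses because
`λ_{ℓ,z}² = 1`.
-/

open scoped BigOperators

lemma sum_sum_mul_ite_eq {ι R : Type*} [Fintype ι] [DecidableEq ι] [CommRing R] (e f : ι → R)
    (a b : R) :
    ∑ i, ∑ k, e i * f k * (if i = k then a else b)
      = (a - b) * ∑ i, e i * f i + b * ((∑ i, e i) * ∑ k, f k) := by
  have hsplit : ∀ i k, e i * f k * (if i = k then a else b)
      = b * (e i * f k) + if i = k then (a - b) * (e i * f i) else 0 := fun i k => by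
    split_ifs with h
    · subst h; ring
    · ring
  simp only [hsplit, Finset.sum_add_distrib, Finset.sum_ite_eq, mem_univ, if_true,
    ← Finset.mul_sum, Finset.sum_mul_sum]
  ring

lemma sum_sum_eq_sum_add_two_nsmul_sum_lt {ι M : Type*} [Fintype ι] [LinearOrder ι]
    [AddCommMonoid M] (g : ι → ι → M) (hg : ∀ a b, g a b = g b a) :
    ∑ a, ∑ b, g a b
      = ∑ a, g a a + 2 • ∑ a, ∑ b ∈ univ.filter (fun b => a < b), g a b := by
  have htri : ∀ a b, g a b = (if a = b then g a b else 0)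
      + ((if a < b then g a b else 0) + (if b < a then g a b else 0)) := fun a b => by
    rcases lt_trichotomy a b with h | rfl | h
    · simp [h, h.ne, h.not_gt]
    · simp
    · simp [h, h.ne', h.not_gt]
  have hswap : ∑ a, ∑ b, (if b < a then g a b else 0)
      = ∑ a, ∑ b, (if a < b then g a b else 0) := by
    rw [Finset.sum_comm]
    exact Finset.sum_congr rfl fun a _ => Finset.sum_congr rfl fun b _ => by rw [hg]
  rw [Finset.sum_congr rfl fun a _ => Finset.sum_congr rfl fun b _ => htri a b]
  simp only [Finset.sum_add_distrib, Finset.sum_ite_eq, mem_univ, if_true, hswap,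
    Finset.sum_filter, two_nsmul]

section Randomization

variable {N : ℕ} {J : Type*} [Fintype J] [DecidableEq J] {Nj : J → ℕ}

lemma expect_eq_finsetExpect (f : (Fin N → J) → ℝ) :
    _root_.expect Nj f = 𝔼 T ∈ assignments N Nj, f T :=
  (Finset.expect_eq_sum_div_card _ _).symm

lemma rvar_eq_finsetExpect (f : (Fin N → J) → ℝ) :
    rvar Nj f = 𝔼 T ∈ assignments N Nj, (f T - 𝔼 T' ∈ assignments N Nj, f T') ^ 2 := by
  simp only [rvar, expect_eq_finsetExpect]

lemma comp_perm_mem_assignments (σ : Equiv.Perm (Fin N)) {T : Fin N → J}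
    (hT : T ∈ assignments N Nj) : T ∘ σ ∈ assignments N Nj := by
  simp only [assignments, mem_filter, mem_univ, true_and] at hT ⊢
  intro j
  rw [← hT j]
  exact Finset.card_equiv σ (by simp)

lemma assignments_nonempty (hsum : ∑ j, Nj j = N) : (assignments N Nj).Nonempty := by
  obtain e : Fin N ≃ Σ j, Fin (Nj j) := Fintype.equivOfCardEq (by simp [hsum])
  refine ⟨fun i => (e i).1, ?_⟩
  simp only [assignments, mem_filter, mem_univ, true_and]
  intro j
  rw [Finset.card_equiv e (t := ({j} : Finset J).sigma fun _ => univ) (by simp)]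
  simp

lemma expect_comp_perm {M : Type*} [AddCommMonoid M] [Module ℚ≥0 M] (σ : Equiv.Perm (Fin N))
    (f : (Fin N → J) → M) :
    𝔼 T ∈ assignments N Nj, f (T ∘ σ) = 𝔼 T ∈ assignments N Nj, f T :=
  Finset.expect_nbij' (· ∘ σ) (· ∘ σ.symm) (fun _ => comp_perm_mem_assignments σ)
    (fun _ => comp_perm_mem_assignments σ.symm) (fun T _ => by ext; simp)
    (fun T _ => by ext; simp) (fun _ _ => rfl)

lemma sum_indicator_apply_eq {T : Fin N → J} (hT : T ∈ assignments N Nj) (j : J) :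
    ∑ i, (if T i = j then (1 : ℝ) else 0) = Nj j := by
  simp only [assignments, mem_filter, mem_univ, true_and] at hT
  rw [Finset.sum_boole, hT j]

lemma expect_indicator (hA : (assignments N Nj).Nonempty) (i : Fin N) (j : J) :
    𝔼 T ∈ assignments N Nj, (if T i = j then (1 : ℝ) else 0) = Nj j / N := by
  have hN : (N : ℝ) ≠ 0 := by exact_mod_cast i.pos.ne'
  have hsymm : ∀ k, 𝔼 T ∈ assignments N Nj, (if T k = j then (1 : ℝ) else 0)
      = 𝔼 T ∈ assignments N Nj, (if T i = j then (1 : ℝ) else 0) := fun k => by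
    simpa using expect_comp_perm (Equiv.swap i k) fun T => if T i = j then (1 : ℝ) else 0
  rw [eq_div_iff hN, mul_comm]
  calc (N : ℝ) * 𝔼 T ∈ assignments N Nj, (if T i = j then (1 : ℝ) else 0)
      = ∑ k, 𝔼 T ∈ assignments N Nj, (if T k = j then (1 : ℝ) else 0) := by
        simp [hsymm]
    _ = Nj j := by
        rw [← Finset.expect_sum_comm, Finset.expect_congr rfl fun T hT =>
          sum_indicator_apply_eq hT j, Finset.expect_const hA]

lemma expect_indicator_mul_indicator_self (hA : (assignments N Nj).Nonempty) (i : Fin N)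
    (j j' : J) :
    𝔼 T ∈ assignments N Nj, (if T i = j then (1 : ℝ) else 0) * (if T i = j' then 1 else 0)
      = if j = j' then (Nj j : ℝ) / N else 0 := by
  split_ifs with h
  · subst h
    rw [← expect_indicator hA i j]
    exact Finset.expect_congr rfl fun T _ => by split_ifs <;> simp
  · refine Finset.expect_eq_zero fun T _ => ?_
    by_cases hj : T i = j
    · simp [hj, h]
    · simp [hj]

lemma expect_indicator_mul_indicator_of_ne (hA : (assignments N Nj).Nonempty) {i i' : Fin N}
    (hii' : i ≠ i') (j j' : J) :
    𝔼 T ∈ assignments N Nj, (if T i = j then (1 : ℝ) else 0) * (if T i' = j' then 1 else 0)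
      = Nj j * (Nj j' - if j = j' then 1 else 0) / (N * (N - 1)) := by
  set E : Fin N → ℝ := fun k =>
    𝔼 T ∈ assignments N Nj, (if T i = j then (1 : ℝ) else 0) * (if T k = j' then 1 else 0)
  have hN : (N : ℝ) ≠ 0 := by exact_mod_cast i.pos.ne'
  have hN1 : (N : ℝ) - 1 ≠ 0 := fun h => by
    obtain rfl : N = 1 := by exact_mod_cast sub_eq_zero.1 h
    exact hii' (Subsingleton.elim _ _)
  have hsymm : ∀ k ∈ univ.erase i, E k = E i' := fun k hk => by
    have hi : Equiv.swap i' k i = i := Equiv.swap_apply_of_ne_of_ne hii' (ne_of_mem_erase hk).symm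
    simpa [E, hi] using expect_comp_perm (Equiv.swap i' k) fun T =>
      (if T i = j then (1 : ℝ) else 0) * (if T i' = j' then 1 else 0)
  have hrow : ∑ k, E k = Nj j' * (Nj j / N) := by
    simp only [E]
    rw [← Finset.expect_sum_comm, Finset.expect_congr rfl fun T hT => by
      rw [← Finset.mul_sum, sum_indicator_apply_eq hT j', mul_comm], ← Finset.mul_expect,
      expect_indicator hA i j]
  rw [← Finset.add_sum_erase _ _ (mem_univ i), Finset.sum_congr rfl hsymm, Finset.sum_const,
    Finset.card_erase_of_mem (mem_univ i), card_univ, Fintype.card_fin, nsmul_eq_mul,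
    Nat.cast_pred i.pos] at hrow
  simp only [E, expect_indicator_mul_indicator_self hA] at hrow
  rw [eq_div_iff (mul_ne_zero hN hN1)]
  split_ifs at hrow ⊢ <;> field_simp at hrow <;> linear_combination hrow

lemma expect_indicator_mul_indicator (hA : (assignments N Nj).Nonempty) (i k : Fin N)
    (j j' : J) :
    𝔼 T ∈ assignments N Nj, (if T i = j then (1 : ℝ) else 0) * (if T k = j' then 1 else 0)
      = if i = k then (if j = j' then (Nj j : ℝ) / N else 0)
        else Nj j * (Nj j' - if j = j' then 1 else 0) / (N * (N - 1)) := by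
  by_cases h : i = k
  · subst h
    rw [if_pos rfl, expect_indicator_mul_indicator_self hA]
  · rw [if_neg h, expect_indicator_mul_indicator_of_ne hA h]

lemma rvar_const_add_sum_mul {ι : Type*} (hA : (assignments N Nj).Nonempty) (s : Finset ι)
    (c : ℝ) (a : ι → ℝ) (X : ι → (Fin N → J) → ℝ)
    (hX : ∀ z ∈ s, 𝔼 T ∈ assignments N Nj, X z T = 0) :
    rvar Nj (fun T => c + ∑ z ∈ s, a z * X z T)
      = ∑ z ∈ s, ∑ z' ∈ s, a z * a z' * 𝔼 T ∈ assignments N Nj, X z T * X z' T := by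
  have hmean : 𝔼 T ∈ assignments N Nj, (c + ∑ z ∈ s, a z * X z T) = c := by
    rw [Finset.expect_add_distrib, Finset.expect_const hA, Finset.expect_sum_comm,
      Finset.sum_eq_zero fun z hz => by rw [← Finset.mul_expect, hX z hz, mul_zero], add_zero]
  rw [rvar_eq_finsetExpect, hmean]
  calc 𝔼 T ∈ assignments N Nj, (c + ∑ z ∈ s, a z * X z T - c) ^ 2
      = 𝔼 T ∈ assignments N Nj, ∑ z ∈ s, ∑ z' ∈ s, a z * a z' * (X z T * X z' T) :=
        Finset.expect_congr rfl fun T _ => by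
          rw [add_sub_cancel_left, sq, Finset.sum_mul_sum]
          exact Finset.sum_congr rfl fun z _ => Finset.sum_congr rfl fun z' _ => by ring
    _ = _ := by simp only [Finset.expect_sum_comm, ← Finset.mul_expect]

end Randomization

section Population

variable {N : ℕ} {J : Type*} (Y : Fin N → J → ℝ)

noncomputable def Scov (j j' : J) : ℝ :=
  (∑ i, (Y i j - Pmean Y j) * (Y i j' - Pmean Y j')) / ((N : ℝ) - 1)

lemma S2_eq_Scov (j : J) : S2 Y j = Scov Y j j := by
  simp only [S2, Scov, sq]

lemma S2_add_S2_sub_S2diff (j j' : J) : S2 Y j + S2 Y j' - S2diff Y j j' = 2 * Scov Y j j' := by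
  simp only [S2, S2diff, Scov, ← add_div, ← sub_div, mul_div_assoc', Finset.mul_sum,
    ← Finset.sum_add_distrib, ← Finset.sum_sub_distrib]
  exact congrArg (· / _) (Finset.sum_congr rfl fun i _ => by ring)

lemma sum_sub_Pmean (j : J) : ∑ i, (Y i j - Pmean Y j) = 0 := by
  rcases eq_or_ne N 0 with rfl | hN
  · simp
  · rw [Finset.sum_sub_distrib, Finset.sum_const, card_univ, Fintype.card_fin, nsmul_eq_mul,
      Pmean, mul_div_cancel₀ _ (by exact_mod_cast hN), sub_self]

end Population

section Estimator

variable {N : ℕ} {J : Type*} [Fintype J] [DecidableEq J] {Nj : J → ℕ}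
  (Y : Fin N → J → ℝ)

lemma pObs_sub_Pmean {T : Fin N → J} (hT : T ∈ assignments N Nj) {j : J} (hj : Nj j ≠ 0) :
    pObs Y Nj j T - Pmean Y j
      = (∑ i, (if T i = j then (1 : ℝ) else 0) * (Y i j - Pmean Y j)) / Nj j := by
  have hj' : (Nj j : ℝ) ≠ 0 := by exact_mod_cast hj
  rw [pObs, eq_div_iff hj', sub_mul, div_mul_cancel₀ _ hj', ← sum_indicator_apply_eq hT j,
    Finset.sum_filter, Finset.mul_sum, ← Finset.sum_sub_distrib]
  exact Finset.sum_congr rfl fun i _ => by split_ifs <;> ring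

lemma expect_pObs_sub_Pmean (hA : (assignments N Nj).Nonempty) {j : J} (hj : Nj j ≠ 0) :
    𝔼 T ∈ assignments N Nj, (pObs Y Nj j T - Pmean Y j) = 0 := by
  rw [Finset.expect_congr rfl fun T hT => pObs_sub_Pmean Y hT hj, ← Finset.expect_div,
    Finset.expect_sum_comm]
  simp only [← Finset.expect_mul, expect_indicator hA, ← Finset.mul_sum, sum_sub_Pmean,
    mul_zero, zero_div]

lemma expect_pObs_sub_mul_pObs_sub (hA : (assignments N Nj).Nonempty) (hN : 2 ≤ N)
    (hNj : ∀ j, Nj j ≠ 0) (j j' : J) :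
    𝔼 T ∈ assignments N Nj, (pObs Y Nj j T - Pmean Y j) * (pObs Y Nj j' T - Pmean Y j')
      = (if j = j' then ((N : ℝ) - Nj j) / (N * Nj j) else -1 / N) * Scov Y j j' := by
  have hN0 : (N : ℝ) ≠ 0 := by positivity
  have hN1 : (N : ℝ) - 1 ≠ 0 := by
    have : (2 : ℝ) ≤ N := by exact_mod_cast hN
    linarith
  have hj : (Nj j : ℝ) ≠ 0 := by exact_mod_cast hNj j
  have hj' : (Nj j' : ℝ) ≠ 0 := by exact_mod_cast hNj j'
  have hprod : ∀ T ∈ assignments N Nj,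
      (pObs Y Nj j T - Pmean Y j) * (pObs Y Nj j' T - Pmean Y j')
        = (∑ i, ∑ k, (Y i j - Pmean Y j) * (Y k j' - Pmean Y j')
            * ((if T i = j then (1 : ℝ) else 0) * (if T k = j' then 1 else 0)))
          / (Nj j * Nj j') := fun T hT => by
    rw [pObs_sub_Pmean Y hT (hNj j), pObs_sub_Pmean Y hT (hNj j'), div_mul_div_comm,
      Finset.sum_mul_sum]
    exact congrArg (· / _) (Finset.sum_congr rfl fun i _ => Finset.sum_congr rfl fun k _ => by
      ring)
  rw [Finset.expect_congr rfl hprod, ← Finset.expect_div, Finset.expect_sum_comm]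
  simp only [Finset.expect_sum_comm, ← Finset.mul_expect, expect_indicator_mul_indicator hA,
    sum_sum_mul_ite_eq, sum_sub_Pmean, Scov]
  split_ifs with h
  · subst h
    field_simp
    ring
  · field_simp
    ring

lemma rvar_const_add_sum_mul_pObs_sub [LinearOrder J] (hA : (assignments N Nj).Nonempty)
    (hN : 2 ≤ N) (hNj : ∀ j, Nj j ≠ 0) (c : ℝ) (a : J → ℝ) :
    rvar Nj (fun T => c + ∑ j, a j * (pObs Y Nj j T - Pmean Y j))
      = ∑ j, a j ^ 2 * (((N : ℝ) - Nj j) / (N * Nj j) * S2 Y j)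
        - 2 / N * ∑ j, ∑ j' ∈ univ.filter (fun j' => j < j'), a j * a j' * Scov Y j j' := by
  have hdiag : ∀ j, a j * a j * 𝔼 T ∈ assignments N Nj,
      (pObs Y Nj j T - Pmean Y j) * (pObs Y Nj j T - Pmean Y j)
        = a j ^ 2 * (((N : ℝ) - Nj j) / (N * Nj j) * S2 Y j) := fun j => by
    rw [expect_pObs_sub_mul_pObs_sub Y hA hN hNj, if_pos rfl, S2_eq_Scov, sq]
  have hoff : ∀ j, ∀ j' ∈ univ.filter (fun j' => j < j'),
      a j * a j' * 𝔼 T ∈ assignments N Nj,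
        (pObs Y Nj j T - Pmean Y j) * (pObs Y Nj j' T - Pmean Y j')
        = -(1 / N) * (a j * a j' * Scov Y j j') := fun j j' hj' => by
    rw [expect_pObs_sub_mul_pObs_sub Y hA hN hNj, if_neg (Finset.mem_filter.1 hj').2.ne]
    ring
  rw [rvar_const_add_sum_mul hA _ _ _ _ fun j _ => expect_pObs_sub_Pmean Y hA (hNj j),
    sum_sum_eq_sum_add_two_nsmul_sum_lt _ fun j j' => by simp only [mul_comm]]
  simp only [hdiag, Finset.sum_congr rfl fun j _ => Finset.sum_congr rfl (hoff j),
    ← Finset.mul_sum, nsmul_eq_mul]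
  ring

end Estimator

lemma lam_mul_self {K : ℕ} (ℓ : Finset (Fin K)) (z : Fin (2 ^ K)) :
    lam ℓ z * lam ℓ z = 1 := by
  rw [lam, ← Finset.prod_mul_distrib]
  exact Finset.prod_eq_one fun k _ => by split_ifs <;> norm_num

theorem rvar_linearized_logFE_general {N K : ℕ} (hN : 2 ≤ N)
    (Y : Fin N → Fin (2 ^ K) → ℝ) (Nj : Fin (2 ^ K) → ℕ)
    (hpos : ∀ z, 1 ≤ Nj z) (hsum : ∑ z, Nj z = N)
    (ℓ : Finset (Fin K)) :
    rvar Nj (fun T =>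
        (1 / 2 ^ (K - 1)) * ∑ z, lam ℓ z * Real.log (Pmean Y z)
          + (1 / 2 ^ (K - 1)) * ∑ z, lam ℓ z * ((pObs Y Nj z T - Pmean Y z) / Pmean Y z)) =
      (1 / 2 ^ (2 * (K - 1))) *
        ((∑ z, ((N : ℝ) - (Nj z : ℝ)) * S2 Y z / ((N : ℝ) * (Nj z : ℝ) * (Pmean Y z) ^ 2))
          - (1 / (N : ℝ)) * ∑ z, ∑ z' ∈ Finset.univ.filter (fun z' => z < z'),
              lam ℓ z * lam ℓ z' * ((S2 Y z + S2 Y z' - S2diff Y z z') /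
                (Pmean Y z * Pmean Y z'))) := by
  have hA := assignments_nonempty hsum
  have hNj : ∀ z, Nj z ≠ 0 := fun z => Nat.one_le_iff_ne_zero.mp (hpos z)
  set a : Fin (2 ^ K) → ℝ := fun z => 1 / 2 ^ (K - 1) * lam ℓ z / Pmean Y z
  have hlin : ∀ T,
      (1 / 2 ^ (K - 1)) * ∑ z, lam ℓ z * ((pObs Y Nj z T - Pmean Y z) / Pmean Y z)
        = ∑ z, a z * (pObs Y Nj z T - Pmean Y z) := fun T => by
    rw [Finset.mul_sum]
    exact Finset.sum_congr rfl fun z _ => by ring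
  simp only [hlin]
  have hdiag : ∑ z, a z ^ 2 * (((N : ℝ) - Nj z) / (N * Nj z) * S2 Y z)
      = 1 / 2 ^ (2 * (K - 1))
          * ∑ z, ((N : ℝ) - Nj z) * S2 Y z / (N * Nj z * Pmean Y z ^ 2) := by
    rw [Finset.mul_sum]
    refine Finset.sum_congr rfl fun z _ => ?_
    linear_combination (1 / 2 ^ (2 * (K - 1)) * (((N : ℝ) - Nj z) * S2 Y z
      / (N * Nj z * Pmean Y z ^ 2))) * lam_mul_self ℓ z
  have hoff : ∑ z, ∑ z' ∈ univ.filter (fun z' => z < z'), a z * a z' * Scov Y z z'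
      = 1 / 2 ^ (2 * (K - 1)) / 2 * ∑ z, ∑ z' ∈ univ.filter (fun z' => z < z'),
          lam ℓ z * lam ℓ z' * ((S2 Y z + S2 Y z' - S2diff Y z z')
            / (Pmean Y z * Pmean Y z')) := by
    simp only [Finset.mul_sum, S2_add_S2_sub_S2diff]
    exact Finset.sum_congr rfl fun z _ => Finset.sum_congr rfl fun z' _ => by ring
  rw [rvar_const_add_sum_mul_pObs_sub Y hA hN hNj, hdiag, hoff]
  ring

/-- Variance of the first-order linearization of the logarithmic factorial effect estimator:
if `P_z > 0` for all `z` then, with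
`η̃_ℓ = η_ℓ + 2^{-(K-1)} Σ_z λ_{ℓ,z} (p_z - P_z)/P_z` where
`η_ℓ = 2^{-(K-1)} Σ_z λ_{ℓ,z} log P_z`,
`Var(η̃_ℓ) = 2^{-2(K-1)} ( Σ_z (N-N_z) S_z² / (N N_z P_z²)
  - (1/N) Σ_{z<z'} λ_{ℓ,z} λ_{ℓ,z'} (S_z² + S_{z'}² - S²_{z-z'})/(P_z P_{z'}) )`. -/
theorem rvar_linearized_logFE {N K : ℕ} (hN : 2 ≤ N)
    (Y : Fin N → Fin (2 ^ K) → ℝ) (Nj : Fin (2 ^ K) → ℕ)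
    (hpos : ∀ z, 1 ≤ Nj z) (hsum : ∑ z, Nj z = N)
    (hP : ∀ z, 0 < Pmean Y z)
    (ℓ : Finset (Fin K)) (hℓ : ℓ.Nonempty) :
    rvar Nj (fun T =>
        (1 / 2 ^ (K - 1)) * ∑ z, lam ℓ z * Real.log (Pmean Y z)
          + (1 / 2 ^ (K - 1)) * ∑ z, lam ℓ z * ((pObs Y Nj z T - Pmean Y z) / Pmean Y z)) =
      (1 / 2 ^ (2 * (K - 1))) *
        ((∑ z, ((N : ℝ) - (Nj z : ℝ)) * S2 Y z / ((N : ℝ) * (Nj z : ℝ) * (Pmean Y z) ^ 2))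
          - (1 / (N : ℝ)) * ∑ z, ∑ z' ∈ Finset.univ.filter (fun z' => z < z'),
              lam ℓ z * lam ℓ z' * ((S2 Y z + S2 Y z' - S2diff Y z z') /
                (Pmean Y z * Pmean Y z'))) :=
  rvar_linearized_logFE_general hN Y Nj hpos hsum ℓ
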